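/- The number of decoding steps needed to fully decode an encoded string graph H equals the number of encoding edges in H, and the fully decoded graph is unique up to isomorphism. -/

import Mathlib

/-- Vertex labels: node-vertex labels, wire-vertex labels, and nonterminal labels. -/
inductive VLab : Type
  | node : ℕ → VLab
  | wire : ℕ → VLab
  | nt : ℕ → VLab
  deriving DecidableEq

/-- Edge labels: plain (terminal) labels and encoding labels. -/
inductive ELab : Type
  | plain : ℕ → ELab
  | enc : ℕ → ELab
  deriving DecidableEq

def VLab.isNode : VLab → Bool | .node _ => true | _ => false
def VLab.isWire : VLab → Bool | .wire _ => true | _ => false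
def VLab.isNT : VLab → Bool | .nt _ => true | _ => false
def ELab.isEnc : ELab → Bool | .enc _ => true | _ => false

/-- A finite labelled directed graph with vertices drawn from ℕ. -/
structure SGraph : Type where
  V : Finset ℕ
  E : Finset (ℕ × ELab × ℕ)
  lab : ℕ → VLab

def inDeg (H : SGraph) (v : ℕ) : ℕ := (H.E.filter (fun e => e.2.2 = v)).card
def outDeg (H : SGraph) (v : ℕ) : ℕ := (H.E.filter (fun e => e.1 = v)).card

/-- Edges connect distinct vertices of the graph (no self-loops). -/
def WellFormed (H : SGraph) : Prop := ∀ e ∈ H.E, e.1 ∈ H.V ∧ e.2.2 ∈ H.V ∧ e.1 ≠ e.2.2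

/-- A string graph: wire-vertices have in/out-degree at most one, no encoding
edges, and node-vertices are adjacent only to wire-vertices. -/
def StringGraph (H : SGraph) : Prop :=
  WellFormed H ∧
  (∀ v ∈ H.V, (H.lab v).isNode = true ∨ (H.lab v).isWire = true) ∧
  (∀ v ∈ H.V, (H.lab v).isWire = true → inDeg H v ≤ 1 ∧ outDeg H v ≤ 1) ∧
  (∀ e ∈ H.E, e.2.1.isEnc = false) ∧
  (∀ e ∈ H.E, ¬((H.lab e.1).isNode = true ∧ (H.lab e.2.2).isNode = true))

/-- An encoded string graph: like a string graph but encoding-labelled edges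
between node-vertices are allowed. -/
def EncodedSG (H : SGraph) : Prop :=
  WellFormed H ∧
  (∀ v ∈ H.V, (H.lab v).isNode = true ∨ (H.lab v).isWire = true) ∧
  (∀ v ∈ H.V, (H.lab v).isWire = true → inDeg H v ≤ 1 ∧ outDeg H v ≤ 1) ∧
  (∀ e ∈ H.E, if e.2.1.isEnc = true
    then (H.lab e.1).isNode = true ∧ (H.lab e.2.2).isNode = true
    else ¬((H.lab e.1).isNode = true ∧ (H.lab e.2.2).isNode = true))

/-- Number of encoding edges. -/
def encCount (H : SGraph) : ℕ := (H.E.filter (fun e => e.2.1.isEnc = true)).card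

def isInput (H : SGraph) (v : ℕ) : Prop := (H.lab v).isWire = true ∧ inDeg H v = 0
def isOutput (H : SGraph) (v : ℕ) : Prop := (H.lab v).isWire = true ∧ outDeg H v = 0

/-- A decoding rule: a replacement fragment with two distinguished node-vertices. -/
structure DecRule : Type where
  F : SGraph
  src : ℕ
  tgt : ℕ

/-- A decoding system: one rule for every triple (encoding label, node label, node label). -/
structure DecSystem : Type where
  rule : ℕ → ℕ → ℕ → DecRule

/-- The rule for (α,σ₁,σ₂) has as RHS a string graph on the two node-vertices with at
least one additional vertex and no inputs, outputs or encoding edges. -/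
def ValidDecRule (R : DecRule) (s1 s2 : ℕ) : Prop :=
  R.src ∈ R.F.V ∧ R.tgt ∈ R.F.V ∧ R.src ≠ R.tgt ∧
  R.F.lab R.src = VLab.node s1 ∧ R.F.lab R.tgt = VLab.node s2 ∧
  StringGraph R.F ∧ 3 ≤ R.F.V.card ∧
  (∀ v ∈ R.F.V, (R.F.lab v).isNode = true → v = R.src ∨ v = R.tgt) ∧
  (∀ v ∈ R.F.V, (R.F.lab v).isWire = true → inDeg R.F v = 1 ∧ outDeg R.F v = 1)

def ValidDecSystem (T : DecSystem) : Prop := ∀ a s1 s2, ValidDecRule (T.rule a s1 s2) s1 s2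

/-- One DPO decoding step: remove one encoding edge and glue in a fresh copy of the
corresponding rule's right-hand side on its two endpoints. -/
def DecStep (T : DecSystem) (H H' : SGraph) : Prop :=
  ∃ u a w s1 s2, (u, ELab.enc a, w) ∈ H.E ∧
    H.lab u = VLab.node s1 ∧ H.lab w = VLab.node s2 ∧
    ∃ ρ : ℕ → ℕ,
      Set.InjOn ρ ↑(T.rule a s1 s2).F.V ∧
      ρ (T.rule a s1 s2).src = u ∧ ρ (T.rule a s1 s2).tgt = w ∧
      (∀ x ∈ (T.rule a s1 s2).F.V, x ≠ (T.rule a s1 s2).src → x ≠ (T.rule a s1 s2).tgt →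
        ρ x ∉ H.V) ∧
      H'.V = H.V ∪ (T.rule a s1 s2).F.V.image ρ ∧
      H'.E = (H.E.erase (u, ELab.enc a, w)) ∪
        (T.rule a s1 s2).F.E.image (fun e => (ρ e.1, e.2.1, ρ e.2.2)) ∧
      (∀ v ∈ H.V, H'.lab v = H.lab v) ∧
      (∀ x ∈ (T.rule a s1 s2).F.V, H'.lab (ρ x) = (T.rule a s1 s2).F.lab x)

/-- Full decoding: exhaustive application of the decoding system. -/
def FullDecode (T : DecSystem) (H H' : SGraph) : Prop :=
  Relation.ReflTransGen (DecStep T) H H' ∧ encCount H' = 0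

/-- SGraph isomorphism. -/
def GIso (H K : SGraph) : Prop :=
  ∃ f : ℕ → ℕ, Set.BijOn f ↑H.V ↑K.V ∧
    (∀ v ∈ H.V, K.lab (f v) = H.lab v) ∧
    (∀ u l w, u ∈ H.V → w ∈ H.V → ((u, l, w) ∈ H.E ↔ (f u, l, f w) ∈ K.E))

/-- Exactly `n` decoding steps. -/
def DecStepN (T : DecSystem) : ℕ → SGraph → SGraph → Prop
  | 0 => fun H H' => H = H'
  | n + 1 => fun H H' => ∃ K, DecStep T H K ∧ DecStepN T n K H'

/-!
A decoding step deletes one encoding edge and glues in a right-hand side without encoding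
edges, so every step lowers the number of encoding edges by exactly one; this gives the step
count and termination. For uniqueness we show, by strong induction on the number of encoding
edges, that full decodings of isomorphic graphs are isomorphic. Gluing the same rule along
corresponding edges of isomorphic graphs gives isomorphic graphs, and gluings along distinct
edges commute, since they touch disjoint edge sets. So if the decoding of `A` starts with the
edge `e`, the decoding of the isomorphic `B` can be rearranged to start with the image of `e`,
and the induction hypothesis applies to the two resulting graphs.
-/

open Finset

def mapEdge (f : ℕ → ℕ) (d : ℕ × ELab × ℕ) : ℕ × ELab × ℕ := (f d.1, d.2.1, f d.2.2)

theorem VLab.isNode_iff {l : VLab} : l.isNode = true ↔ ∃ s, l = .node s := by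
  cases l <;> simp [VLab.isNode]

theorem ELab.isEnc_iff {l : ELab} : l.isEnc = true ↔ ∃ a, l = .enc a := by
  cases l <;> simp [ELab.isEnc]

theorem Finset.image_erase_of_injOn {α β : Type*} [DecidableEq α] [DecidableEq β] {f : α → β}
    {s : Finset α} {a : α} (hf : Set.InjOn f ↑(insert a s)) :
    (s.erase a).image f = (s.image f).erase (f a) := by
  refine Subset.antisymm (fun y hy => ?_) (erase_image_subset_image_erase f s a)
  obtain ⟨x, hx, rfl⟩ := mem_image.1 hy
  obtain ⟨hxa, hxs⟩ := mem_erase.1 hx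
  refine mem_erase.2 ⟨fun hfx => hxa ?_, mem_image_of_mem f hxs⟩
  exact hf (by simp [hxs]) (by simp) hfx

theorem mapEdge_injOn {f : ℕ → ℕ} {V : Finset ℕ} {E : Finset (ℕ × ELab × ℕ)}
    (hf : Set.InjOn f V) (hE : ∀ d ∈ E, d.1 ∈ V ∧ d.2.2 ∈ V) : Set.InjOn (mapEdge f) E := by
  rintro ⟨p, l, q⟩ hd ⟨p', l', q'⟩ hd' heq
  simp only [mapEdge, Prod.mk.injEq] at heq
  obtain ⟨hp, rfl, hq⟩ := heq
  have hp' : p = p' := hf (hE _ hd).1 (hE _ hd').1 hp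
  have hq' : q = q' := hf (hE _ hd).2 (hE _ hd').2 hq
  rw [hp', hq']

theorem notMem_image_mapEdge {F : Finset (ℕ × ELab × ℕ)} {d : ℕ × ELab × ℕ} (f : ℕ → ℕ)
    (hF : ∀ x ∈ F, x.2.1.isEnc = false) (hd : d.2.1.isEnc = true) : d ∉ F.image (mapEdge f) := by
  intro hmem
  obtain ⟨x, hx, rfl⟩ := mem_image.1 hmem
  simp [mapEdge, hF x hx] at hd

structure IsGIso (f : ℕ → ℕ) (H K : SGraph) : Prop where
  bijOn : Set.BijOn f H.V K.V
  lab_eq : ∀ v ∈ H.V, K.lab (f v) = H.lab v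
  mem_E_iff : ∀ u l w, u ∈ H.V → w ∈ H.V → ((u, l, w) ∈ H.E ↔ (f u, l, f w) ∈ K.E)

theorem gIso_iff {H K : SGraph} : GIso H K ↔ ∃ f, IsGIso f H K :=
  ⟨fun ⟨f, h1, h2, h3⟩ => ⟨f, h1, h2, h3⟩, fun ⟨f, h1, h2, h3⟩ => ⟨f, h1, h2, h3⟩⟩

namespace IsGIso

variable {f g : ℕ → ℕ} {H K L : SGraph}

theorem id (H : SGraph) : IsGIso id H H :=
  ⟨Set.bijOn_id _, fun _ _ => rfl, fun _ _ _ _ _ => Iff.rfl⟩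

theorem comp (hg : IsGIso g K L) (hf : IsGIso f H K) : IsGIso (g ∘ f) H L where
  bijOn := hg.bijOn.comp hf.bijOn
  lab_eq v hv := (hg.lab_eq _ (hf.bijOn.mapsTo hv)).trans (hf.lab_eq v hv)
  mem_E_iff u l w hu hw := (hf.mem_E_iff u l w hu hw).trans
    (hg.mem_E_iff _ l _ (hf.bijOn.mapsTo hu) (hf.bijOn.mapsTo hw))

theorem V_eq_image (hf : IsGIso f H K) : K.V = H.V.image f := by
  rw [← coe_inj, coe_image, hf.bijOn.image_eq]

theorem E_eq_image (hf : IsGIso f H K) (hH : WellFormed H) (hK : WellFormed K) :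
    K.E = H.E.image (mapEdge f) := by
  ext ⟨p, l, q⟩
  constructor
  · intro hd
    obtain ⟨u, hu, rfl⟩ := hf.bijOn.surjOn (hK _ hd).1
    obtain ⟨w, hw, rfl⟩ := hf.bijOn.surjOn (hK _ hd).2.1
    exact mem_image.2 ⟨(u, l, w), (hf.mem_E_iff u l w hu hw).2 hd, rfl⟩
  · intro hd
    obtain ⟨⟨u, l, w⟩, hd, heq⟩ := mem_image.1 hd
    rw [← heq]
    exact (hf.mem_E_iff u l w (hH _ hd).1 (hH _ hd).2.1).1 hd

theorem encCount_eq (hf : IsGIso f H K) (hH : WellFormed H) (hK : WellFormed K) :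
    encCount K = encCount H := by
  have hinj : Set.InjOn (mapEdge f) H.E :=
    mapEdge_injOn hf.bijOn.injOn fun d hd => ⟨(hH d hd).1, (hH d hd).2.1⟩
  rw [encCount, encCount, hf.E_eq_image hH hK, filter_image,
    card_image_of_injOn (hinj.mono (coe_subset.2 (filter_subset _ _)))]
  rfl

end IsGIso

theorem isGIso_of_injOn {f : ℕ → ℕ} {H K : SGraph} (hH : WellFormed H) (hinj : Set.InjOn f H.V)
    (hV : K.V = H.V.image f) (hE : K.E = H.E.image (mapEdge f))
    (hlab : ∀ v ∈ H.V, K.lab (f v) = H.lab v) : IsGIso f H K where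
  bijOn := by rw [hV, coe_image]; exact hinj.bijOn_image
  lab_eq := hlab
  mem_E_iff u l w hu hw := by
    refine ⟨fun hd => hE ▸ mem_image_of_mem (mapEdge f) hd, fun hd => ?_⟩
    obtain ⟨d, hdE, hdeq⟩ := mem_image.1 (hE ▸ hd)
    have hinjE := mapEdge_injOn (E := insert (u, l, w) H.E) hinj (by
      intro x hx
      rcases mem_insert.1 hx with rfl | hx
      exacts [⟨hu, hw⟩, ⟨(hH x hx).1, (hH x hx).2.1⟩])
    rwa [← hinjE (mem_insert_of_mem hdE) (mem_insert_self _ _) hdeq]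

theorem GIso.refl (H : SGraph) : GIso H H := gIso_iff.2 ⟨_, IsGIso.id H⟩

theorem GIso.trans {H K L : SGraph} (h₁ : GIso H K) (h₂ : GIso K L) : GIso H L := by
  obtain ⟨f, hf⟩ := gIso_iff.1 h₁
  obtain ⟨g, hg⟩ := gIso_iff.1 h₂
  exact gIso_iff.2 ⟨_, hg.comp hf⟩

/-- The part of `EncodedSG` that decoding steps preserve and that makes a step available at
every encoding edge. -/
def Decodable (H : SGraph) : Prop :=
  WellFormed H ∧ ∀ d ∈ H.E, d.2.1.isEnc = true →
    (H.lab d.1).isNode = true ∧ (H.lab d.2.2).isNode = true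

theorem EncodedSG.decodable {H : SGraph} (hH : EncodedSG H) : Decodable H :=
  ⟨hH.1, fun d hd henc => by simpa [henc] using hH.2.2.2 d hd⟩

/-- `K` arises from `H` by deleting the edge `e` and gluing in the copy `ρ` of the right-hand
side of `R`, whose two distinguished vertices go to the endpoints of `e`. -/
structure IsGluing (R : DecRule) (e : ℕ × ELab × ℕ) (ρ : ℕ → ℕ) (H K : SGraph) : Prop where
  injOn : Set.InjOn ρ R.F.V
  map_src : ρ R.src = e.1
  map_tgt : ρ R.tgt = e.2.2
  fresh : ∀ x ∈ R.F.V, x ≠ R.src → x ≠ R.tgt → ρ x ∉ H.V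
  V_eq : K.V = H.V ∪ R.F.V.image ρ
  E_eq : K.E = H.E.erase e ∪ R.F.E.image (mapEdge ρ)
  lab_of_mem : ∀ v ∈ H.V, K.lab v = H.lab v
  lab_map : ∀ x ∈ R.F.V, K.lab (ρ x) = R.F.lab x

theorem decStep_iff {T : DecSystem} {H K : SGraph} :
    DecStep T H K ↔ ∃ u a w s1 s2 ρ, (u, ELab.enc a, w) ∈ H.E ∧ H.lab u = .node s1 ∧
      H.lab w = .node s2 ∧ IsGluing (T.rule a s1 s2) (u, .enc a, w) ρ H K := by
  constructor
  · rintro ⟨u, a, w, s1, s2, he, hu, hw, ρ, h1, h2, h3, h4, h5, h6, h7, h8⟩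
    exact ⟨u, a, w, s1, s2, ρ, he, hu, hw, h1, h2, h3, h4, h5, h6, h7, h8⟩
  · rintro ⟨u, a, w, s1, s2, ρ, he, hu, hw, h1, h2, h3, h4, h5, h6, h7, h8⟩
    exact ⟨u, a, w, s1, s2, he, hu, hw, ρ, h1, h2, h3, h4, h5, h6, h7, h8⟩

namespace IsGluing

variable {R : DecRule} {e : ℕ × ELab × ℕ} {ρ : ℕ → ℕ} {H K : SGraph}

theorem subset_V (h : IsGluing R e ρ H K) : H.V ⊆ K.V :=
  h.V_eq ▸ subset_union_left

theorem map_mem_V (h : IsGluing R e ρ H K) {x : ℕ} (hx : x ∈ R.F.V) : ρ x ∈ K.V :=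
  h.V_eq ▸ mem_union_right _ (mem_image_of_mem ρ hx)

theorem mem_E_of_ne (h : IsGluing R e ρ H K) {d : ℕ × ELab × ℕ} (hd : d ∈ H.E) (hne : d ≠ e) :
    d ∈ K.E :=
  h.E_eq ▸ mem_union_left _ (mem_erase.2 ⟨hne, hd⟩)

theorem mem_V_cases (h : IsGluing R e ρ H K) (hu : e.1 ∈ H.V) (hw : e.2.2 ∈ H.V) {v : ℕ}
    (hv : v ∈ K.V) : v ∈ H.V ∨ ∃ x ∈ R.F.V, x ≠ R.src ∧ x ≠ R.tgt ∧ ρ x = v := by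
  rcases mem_union.1 (h.V_eq ▸ hv) with hv | hv
  · exact Or.inl hv
  obtain ⟨x, hx, rfl⟩ := mem_image.1 hv
  by_cases hxs : x = R.src
  · exact Or.inl (hxs ▸ h.map_src ▸ hu)
  by_cases hxt : x = R.tgt
  · exact Or.inl (hxt ▸ h.map_tgt ▸ hw)
  exact Or.inr ⟨x, hx, hxs, hxt, rfl⟩

theorem wellFormed (h : IsGluing R e ρ H K) (hR : WellFormed R.F) (hH : WellFormed H) :
    WellFormed K := by
  intro d hd
  rcases mem_union.1 (h.E_eq ▸ hd) with hd | hd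
  · obtain ⟨h1, h2, h3⟩ := hH d (mem_of_mem_erase hd)
    exact ⟨h.subset_V h1, h.subset_V h2, h3⟩
  · obtain ⟨x, hx, rfl⟩ := mem_image.1 hd
    obtain ⟨h1, h2, h3⟩ := hR x hx
    exact ⟨h.map_mem_V h1, h.map_mem_V h2, fun heq => h3 (h.injOn h1 h2 heq)⟩

theorem encCount_add_one (h : IsGluing R e ρ H K) (hR : ∀ d ∈ R.F.E, d.2.1.isEnc = false)
    (he : e ∈ H.E) (henc : e.2.1.isEnc = true) : encCount K + 1 = encCount H := by
  have himage : (R.F.E.image (mapEdge ρ)).filter (fun d => d.2.1.isEnc = true) = ∅ :=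
    filter_eq_empty_iff.2 fun d hd hdenc => notMem_image_mapEdge ρ hR hdenc hd
  rw [encCount, encCount, h.E_eq, filter_union, himage, union_empty, filter_erase,
    card_erase_add_one (mem_filter.2 ⟨he, henc⟩)]

theorem decodable (h : IsGluing R e ρ H K) (hR : WellFormed R.F)
    (hRenc : ∀ d ∈ R.F.E, d.2.1.isEnc = false) (hH : Decodable H) : Decodable K := by
  refine ⟨h.wellFormed hR hH.1, fun d hd henc => ?_⟩
  rcases mem_union.1 (h.E_eq ▸ hd) with hd | hd
  · have hd := mem_of_mem_erase hd
    obtain ⟨hu, hw, -⟩ := hH.1 d hd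
    rw [h.lab_of_mem _ hu, h.lab_of_mem _ hw]
    exact hH.2 d hd henc
  · exact absurd hd (notMem_image_mapEdge ρ hRenc henc)

end IsGluing

theorem exists_isGluing {R : DecRule} {H : SGraph} {e : ℕ × ELab × ℕ} (hR : R.src ≠ R.tgt)
    (hu : e.1 ∈ H.V) (hw : e.2.2 ∈ H.V) (huw : e.1 ≠ e.2.2)
    (hlu : H.lab e.1 = R.F.lab R.src) (hlw : H.lab e.2.2 = R.F.lab R.tgt) :
    ∃ ρ K, IsGluing R e ρ H K := by
  -- inner vertices of the rule are shifted past every vertex of `H`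
  set N := H.V.sup id + 1
  have hlt : ∀ v ∈ H.V, v < N := fun v hv => Nat.lt_succ_of_le (le_sup (f := id) hv)
  have hshift : ∀ x, x + N ∉ H.V := fun x hx => by have := hlt _ hx; omega
  set ρ : ℕ → ℕ := fun x => if x = R.src then e.1 else if x = R.tgt then e.2.2 else x + N
  have hρ : ∀ x, x ≠ R.src → x ≠ R.tgt → ρ x = x + N := fun x hs ht => by simp [ρ, hs, ht]
  have hρtgt : ρ R.tgt = e.2.2 := by simp [ρ, hR.symm]
  refine ⟨ρ, ⟨H.V ∪ R.F.V.image ρ, H.E.erase e ∪ R.F.E.image (mapEdge ρ),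
    fun v => if v ∈ H.V then H.lab v else R.F.lab (v - N)⟩,
    fun x _ y _ hxy => ?_, if_pos rfl, hρtgt, fun x _ hs ht => hρ x hs ht ▸ hshift x,
    rfl, rfl, fun v hv => if_pos hv, fun x _ => ?_⟩
  · have := hlt _ hu
    have := hlt _ hw
    simp only [ρ] at hxy
    split_ifs at hxy <;> omega
  · by_cases hs : x = R.src
    · simp [hs, ρ, hu, hlu]
    by_cases ht : x = R.tgt
    · simp [ht, hρtgt, hw, hlw]
    simp [hρ x hs ht, hshift x]

noncomputable def glueExtension (f ρ ρ' : ℕ → ℕ) (A : SGraph) (R : DecRule) (v : ℕ) : ℕ :=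
  if v ∈ A.V then f v else ρ' (Function.invFunOn ρ R.F.V v)

section Transport

variable {R : DecRule} {e : ℕ × ELab × ℕ} {f ρ ρ' : ℕ → ℕ} {A B K K' : SGraph}

theorem glueExtension_of_mem {v : ℕ} (hv : v ∈ A.V) : glueExtension f ρ ρ' A R v = f v :=
  if_pos hv

theorem glueExtension_map (h : IsGluing R e ρ A K) (h' : IsGluing R (mapEdge f e) ρ' B K')
    (hu : e.1 ∈ A.V) (hw : e.2.2 ∈ A.V) {x : ℕ} (hx : x ∈ R.F.V) :
    glueExtension f ρ ρ' A R (ρ x) = ρ' x := by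
  by_cases hs : x = R.src
  · rw [hs, h.map_src, h'.map_src, glueExtension_of_mem hu, mapEdge]
  by_cases ht : x = R.tgt
  · rw [ht, h.map_tgt, h'.map_tgt, glueExtension_of_mem hw, mapEdge]
  rw [glueExtension, if_neg (h.fresh x hx hs ht), h.injOn.leftInvOn_invFunOn hx]

theorem glueExtension_injOn (hf : IsGIso f A B) (h : IsGluing R e ρ A K)
    (h' : IsGluing R (mapEdge f e) ρ' B K') (hu : e.1 ∈ A.V) (hw : e.2.2 ∈ A.V) :
    Set.InjOn (glueExtension f ρ ρ' A R) K.V := by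
  intro v₁ hv₁ v₂ hv₂ heq
  rcases h.mem_V_cases hu hw hv₁ with hv₁ | ⟨x₁, hx₁, hs₁, ht₁, rfl⟩ <;>
  rcases h.mem_V_cases hu hw hv₂ with hv₂ | ⟨x₂, hx₂, hs₂, ht₂, rfl⟩
  · rw [glueExtension_of_mem hv₁, glueExtension_of_mem hv₂] at heq
    exact hf.bijOn.injOn hv₁ hv₂ heq
  · rw [glueExtension_of_mem hv₁, glueExtension_map h h' hu hw hx₂] at heq
    exact absurd (heq ▸ hf.bijOn.mapsTo hv₁) (h'.fresh x₂ hx₂ hs₂ ht₂)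
  · rw [glueExtension_of_mem hv₂, glueExtension_map h h' hu hw hx₁] at heq
    exact absurd (heq ▸ hf.bijOn.mapsTo hv₂) (h'.fresh x₁ hx₁ hs₁ ht₁)
  · rw [glueExtension_map h h' hu hw hx₁, glueExtension_map h h' hu hw hx₂] at heq
    rw [h'.injOn hx₁ hx₂ heq]

theorem IsGluing.isGIso_glueExtension (hR : WellFormed R.F) (hA : WellFormed A)
    (hB : WellFormed B) (hf : IsGIso f A B) (he : e ∈ A.E) (h : IsGluing R e ρ A K)
    (h' : IsGluing R (mapEdge f e) ρ' B K') : IsGIso (glueExtension f ρ ρ' A R) K K' := by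
  obtain ⟨hu, hw, -⟩ := hA e he
  set g := glueExtension f ρ ρ' A R
  have hA' : ∀ d ∈ A.E, d.1 ∈ A.V ∧ d.2.2 ∈ A.V := fun d hd => ⟨(hA d hd).1, (hA d hd).2.1⟩
  have hg : ∀ v ∈ A.V, g v = f v := fun v hv => glueExtension_of_mem hv
  have hgρ : ∀ x ∈ R.F.V, g (ρ x) = ρ' x := fun x hx => glueExtension_map h h' hu hw hx
  have hgE : ∀ d ∈ A.E, mapEdge g d = mapEdge f d := fun d hd => by
    simp only [mapEdge, hg _ (hA' d hd).1, hg _ (hA' d hd).2]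
  have hgρE : ∀ d ∈ R.F.E, mapEdge g (mapEdge ρ d) = mapEdge ρ' d := fun d hd => by
    simp only [mapEdge, hgρ _ (hR d hd).1, hgρ _ (hR d hd).2.1]
  refine isGIso_of_injOn (h.wellFormed hR hA) (glueExtension_injOn hf h h' hu hw) ?_ ?_ ?_
  · rw [h'.V_eq, h.V_eq, image_union, image_image, image_congr hg,
      image_congr (f := g ∘ ρ) hgρ, hf.V_eq_image]
  · rw [h'.E_eq, h.E_eq, image_union, image_image, image_congr (f := mapEdge g ∘ mapEdge ρ) hgρE,
      image_congr (fun d hd => hgE d (mem_of_mem_erase hd)),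
      image_erase_of_injOn (mapEdge_injOn hf.bijOn.injOn (by rwa [insert_eq_of_mem he])),
      hf.E_eq_image hA hB]
  · intro v hv
    rcases h.mem_V_cases hu hw hv with hv | ⟨x, hx, -, -, rfl⟩
    · rw [hg v hv, h'.lab_of_mem _ (hf.bijOn.mapsTo hv), hf.lab_eq v hv, h.lab_of_mem v hv]
    · rw [hgρ x hx, h'.lab_map x hx, h.lab_map x hx]

end Transport

theorem IsGluing.swap {R₁ R₂ : DecRule} {e₁ e₂ : ℕ × ELab × ℕ} {ρ₁ ρ₂ : ℕ → ℕ} {A K L : SGraph}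
    (hA : WellFormed A) (h₁ : IsGluing R₁ e₁ ρ₁ A K) (h₂ : IsGluing R₂ e₂ ρ₂ K L)
    (he₂ : e₂ ∈ A.E) (he₁ρ₂ : e₁ ∉ R₂.F.E.image (mapEdge ρ₂))
    (he₂ρ₁ : e₂ ∉ R₁.F.E.image (mapEdge ρ₁)) :
    ∃ M, IsGluing R₂ e₂ ρ₂ A M ∧ IsGluing R₁ e₁ ρ₁ M L := by
  obtain ⟨hu₂, hw₂, -⟩ := hA e₂ he₂
  refine ⟨⟨A.V ∪ R₂.F.V.image ρ₂, A.E.erase e₂ ∪ R₂.F.E.image (mapEdge ρ₂), L.lab⟩,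
    ⟨h₂.injOn, h₂.map_src, h₂.map_tgt, fun x hx hs ht hxA => h₂.fresh x hx hs ht (h₁.subset_V hxA),
      rfl, rfl, fun v hv => ?_, h₂.lab_map⟩,
    ⟨h₁.injOn, h₁.map_src, h₁.map_tgt, fun x hx hs ht hxM => ?_, ?_, ?_, fun _ _ => rfl,
      fun x hx => ?_⟩⟩
  · rw [h₂.lab_of_mem v (h₁.subset_V hv), h₁.lab_of_mem v hv]
  · rcases mem_union.1 hxM with hxA | hxρ₂
    · exact h₁.fresh x hx hs ht hxA
    obtain ⟨y, hy, hyx⟩ := mem_image.1 hxρ₂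
    by_cases hys : y = R₂.src
    · exact h₁.fresh x hx hs ht (hyx ▸ hys ▸ h₂.map_src ▸ hu₂)
    by_cases hyt : y = R₂.tgt
    · exact h₁.fresh x hx hs ht (hyx ▸ hyt ▸ h₂.map_tgt ▸ hw₂)
    exact h₂.fresh y hy hys hyt (hyx ▸ h₁.map_mem_V hx)
  · rw [h₂.V_eq, h₁.V_eq, union_right_comm]
  · rw [h₂.E_eq, h₁.E_eq, erase_union_distrib, erase_union_distrib,
      erase_eq_of_notMem he₂ρ₁, erase_eq_of_notMem he₁ρ₂, erase_right_comm, union_right_comm]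
  · rw [h₂.lab_of_mem _ (h₁.map_mem_V hx), h₁.lab_map x hx]

namespace ValidDecRule

variable {R : DecRule} {s1 s2 : ℕ}

theorem src_ne_tgt (h : ValidDecRule R s1 s2) : R.src ≠ R.tgt := h.2.2.1

theorem lab_src (h : ValidDecRule R s1 s2) : R.F.lab R.src = .node s1 := h.2.2.2.1

theorem lab_tgt (h : ValidDecRule R s1 s2) : R.F.lab R.tgt = .node s2 := h.2.2.2.2.1

theorem wellFormed (h : ValidDecRule R s1 s2) : WellFormed R.F := h.2.2.2.2.2.1.1

theorem not_isEnc (h : ValidDecRule R s1 s2) : ∀ d ∈ R.F.E, d.2.1.isEnc = false :=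
  h.2.2.2.2.2.1.2.2.2.1

end ValidDecRule

section Decoding

variable {T : DecSystem} {H K X : SGraph}

theorem exists_isGluing_rule (hT : ValidDecSystem T) (hH : WellFormed H) {u a w s1 s2 : ℕ}
    (he : (u, ELab.enc a, w) ∈ H.E) (hu : H.lab u = .node s1) (hw : H.lab w = .node s2) :
    ∃ ρ K, IsGluing (T.rule a s1 s2) (u, .enc a, w) ρ H K :=
  let ⟨hu', hw', huw⟩ := hH _ he
  exists_isGluing (hT a s1 s2).src_ne_tgt hu' hw' huw (hu.trans (hT a s1 s2).lab_src.symm)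
    (hw.trans (hT a s1 s2).lab_tgt.symm)

theorem DecStep.encCount_add_one (hT : ValidDecSystem T) (h : DecStep T H K) :
    encCount K + 1 = encCount H := by
  obtain ⟨u, a, w, s1, s2, ρ, he, -, -, hg⟩ := decStep_iff.1 h
  exact hg.encCount_add_one (hT a s1 s2).not_isEnc he rfl

theorem DecStep.decodable (hT : ValidDecSystem T) (h : DecStep T H K) (hH : Decodable H) :
    Decodable K := by
  obtain ⟨u, a, w, s1, s2, ρ, -, -, -, hg⟩ := decStep_iff.1 h
  exact hg.decodable (hT a s1 s2).wellFormed (hT a s1 s2).not_isEnc hH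

theorem exists_decStep (hT : ValidDecSystem T) (hH : Decodable H) (hn : encCount H ≠ 0) :
    ∃ K, DecStep T H K := by
  obtain ⟨⟨u, l, w⟩, hd⟩ := card_ne_zero.1 hn
  obtain ⟨hd, henc⟩ := mem_filter.1 hd
  obtain ⟨hs1, hs2⟩ := hH.2 _ hd henc
  obtain ⟨a, rfl⟩ := ELab.isEnc_iff.1 henc
  obtain ⟨s1, hs1⟩ := VLab.isNode_iff.1 hs1
  obtain ⟨s2, hs2⟩ := VLab.isNode_iff.1 hs2
  obtain ⟨ρ, K, hg⟩ := exists_isGluing_rule hT hH.1 hd hs1 hs2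
  exact ⟨K, decStep_iff.2 ⟨u, a, w, s1, s2, ρ, hd, hs1, hs2, hg⟩⟩

theorem not_decStep_of_encCount_eq_zero (hz : encCount H = 0) : ¬ DecStep T H K := by
  intro h
  obtain ⟨u, a, w, -, -, -, he, -⟩ := decStep_iff.1 h
  rw [encCount, card_eq_zero, filter_eq_empty_iff] at hz
  exact hz he rfl

theorem DecStepN.encCount_add (hT : ValidDecSystem T) :
    ∀ {n : ℕ} {H H' : SGraph}, DecStepN T n H H' → encCount H' + n = encCount H
  | 0, _, _, rfl => rfl
  | _ + 1, _, _, ⟨_, hK, hKH'⟩ => by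
    have := hK.encCount_add_one hT
    have := hKH'.encCount_add hT
    omega

theorem FullDecode.head (h : DecStep T H K) (hK : FullDecode T K X) : FullDecode T H X :=
  ⟨.head h hK.1, hK.2⟩

theorem exists_fullDecode (hT : ValidDecSystem T) (hH : Decodable H) : ∃ X, FullDecode T H X := by
  induction hn : encCount H generalizing H with
  | zero => exact ⟨H, .refl, hn⟩
  | succ n ih =>
    obtain ⟨K, hK⟩ := exists_decStep hT hH (by omega)
    obtain ⟨X, hX⟩ := ih (hK.decodable hT hH) (by have := hK.encCount_add_one hT; omega)
    exact ⟨X, hX.head hK⟩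

theorem FullDecode.eq_of_encCount_eq_zero (h : FullDecode T H X) (hz : encCount H = 0) :
    X = H := by
  rcases Relation.ReflTransGen.cases_head h.1 with rfl | ⟨K, hK, -⟩
  · rfl
  · exact absurd hK (not_decStep_of_encCount_eq_zero hz)

theorem FullDecode.exists_decStep (h : FullDecode T H X) (hn : encCount H ≠ 0) :
    ∃ K, DecStep T H K ∧ FullDecode T K X := by
  rcases Relation.ReflTransGen.cases_head h.1 with rfl | ⟨K, hK, hKX⟩
  · exact absurd h.2 hn
  · exact ⟨K, hK, hKX, h.2⟩

/-- Local confluence: any encoding edge of `B` may be decoded first. -/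
theorem exists_isGluing_fullDecode_gIso (hT : ValidDecSystem T) {B Y : SGraph}
    (hB : Decodable B) (hBK : DecStep T B K) (hKY : FullDecode T K Y)
    (hK : ∀ Z, FullDecode T K Z → GIso Z Y) {u a w s1 s2 : ℕ}
    (he : (u, ELab.enc a, w) ∈ B.E) (hu : B.lab u = .node s1) (hw : B.lab w = .node s2) :
    ∃ ρ M Z, IsGluing (T.rule a s1 s2) (u, .enc a, w) ρ B M ∧ FullDecode T M Z ∧ GIso Z Y := by
  obtain ⟨u₂, a₂, w₂, t1, t2, ρ₂, he₂, hlu₂, hlw₂, hg₂⟩ := decStep_iff.1 hBK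
  by_cases heq : (u, ELab.enc a, w) = (u₂, .enc a₂, w₂)
  · simp only [Prod.mk.injEq, ELab.enc.injEq] at heq
    obtain ⟨rfl, rfl, rfl⟩ := heq
    obtain rfl : t1 = s1 := VLab.node.inj (hlu₂.symm.trans hu)
    obtain rfl : t2 = s2 := VLab.node.inj (hlw₂.symm.trans hw)
    exact ⟨ρ₂, K, Y, hg₂, hKY, GIso.refl Y⟩
  obtain ⟨hu₂, hw₂, -⟩ := hB.1 _ he₂
  obtain ⟨huB, hwB, -⟩ := hB.1 _ he
  have heK : (u, ELab.enc a, w) ∈ K.E := hg₂.mem_E_of_ne he heq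
  have hKu : K.lab u = .node s1 := (hg₂.lab_of_mem u huB).trans hu
  have hKw : K.lab w = .node s2 := (hg₂.lab_of_mem w hwB).trans hw
  obtain ⟨ρ, L, hL⟩ := exists_isGluing_rule hT (hBK.decodable hT hB).1 heK hKu hKw
  have hKL : DecStep T K L := decStep_iff.2 ⟨u, a, w, s1, s2, ρ, heK, hKu, hKw, hL⟩
  obtain ⟨M, hM, hML⟩ := hg₂.swap hB.1 hL he (notMem_image_mapEdge ρ (hT a s1 s2).not_isEnc rfl)
    (notMem_image_mapEdge ρ₂ (hT a₂ t1 t2).not_isEnc rfl)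
  have hML' : DecStep T M L := decStep_iff.2 ⟨u₂, a₂, w₂, t1, t2, ρ₂,
    hM.mem_E_of_ne he₂ (Ne.symm heq), (hM.lab_of_mem u₂ hu₂).trans hlu₂,
    (hM.lab_of_mem w₂ hw₂).trans hlw₂, hML⟩
  obtain ⟨Z, hZ⟩ := exists_fullDecode hT (hKL.decodable hT (hBK.decodable hT hB))
  exact ⟨ρ, M, Z, hM, hZ.head hML', hK Z (hZ.head hKL)⟩

theorem FullDecode.gIso (hT : ValidDecSystem T) {A B X Y : SGraph} (hA : Decodable A)
    (hB : Decodable B) (hAB : GIso A B) (hX : FullDecode T A X) (hY : FullDecode T B Y) :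
    GIso X Y := by
  induction hn : encCount A using Nat.strong_induction_on generalizing A B X Y with
  | _ n ih =>
  obtain ⟨f, hf⟩ := gIso_iff.1 hAB
  have hnB : encCount B = n := (hf.encCount_eq hA.1 hB.1).trans hn
  rcases Nat.eq_zero_or_pos n with rfl | hpos
  · rwa [hX.eq_of_encCount_eq_zero hn, hY.eq_of_encCount_eq_zero hnB]
  obtain ⟨K₁, hAK₁, hK₁X⟩ := hX.exists_decStep (by omega)
  obtain ⟨K₂, hBK₂, hK₂Y⟩ := hY.exists_decStep (by omega)
  have hn₁ := hAK₁.encCount_add_one hT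
  have hn₂ := hBK₂.encCount_add_one hT
  have hK₂ := hBK₂.decodable hT hB
  obtain ⟨u, a, w, s1, s2, ρ, he, hlu, hlw, hg⟩ := decStep_iff.1 hAK₁
  obtain ⟨hu, hw, -⟩ := hA.1 _ he
  obtain ⟨ρ', M, Z, hM, hMZ, hZY⟩ := exists_isGluing_fullDecode_gIso hT hB hBK₂ hK₂Y
    (fun Z hZ => ih _ (by omega) hK₂ hK₂ (GIso.refl K₂) hZ hK₂Y rfl)
    ((hf.mem_E_iff u _ w hu hw).1 he) ((hf.lab_eq u hu).trans hlu) ((hf.lab_eq w hw).trans hlw)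
  have hK₁M : GIso K₁ M :=
    gIso_iff.2 ⟨_, hg.isGIso_glueExtension (hT a s1 s2).wellFormed hA.1 hB.1 hf he hM⟩
  have hM' : Decodable M := hM.decodable (hT a s1 s2).wellFormed (hT a s1 s2).not_isEnc hB
  exact (ih _ (by omega) (hAK₁.decodable hT hA) hM' hK₁M hK₁X hMZ rfl).trans hZY

end Decoding

/-- Fully decoding an encoded string graph takes exactly as many
steps as there are encoding edges, and the result is unique up to isomorphism. -/
theorem decoding_step_count_and_uniqueness (T : DecSystem) (hT : ValidDecSystem T)
    (H : SGraph) (hH : EncodedSG H) :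
    (∀ n H', DecStepN T n H H' → encCount H' = 0 → n = encCount H) ∧
    (∀ H' H'', FullDecode T H H' → FullDecode T H H'' → GIso H' H'') := by
  refine ⟨fun n H' h hz => ?_, fun H' H'' h₁ h₂ => ?_⟩
  · have := h.encCount_add hT
    omega
  · exact h₁.gIso hT hH.decodable hH.decodable (GIso.refl H) h₂
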